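/- For any Weyl group element w ∈ W_Φ and any root subsystem Δ ⊆ Φ, there exists a unique element σ of the Weyl group W_Δ of Δ such that I_Δ(σ) = I_Φ(w) ∩ Δ, where Δ₊ = Δ ∩ Φ₊ serves as the positive system for Δ. (This defines the flattening map f_Δ : W_Φ → W_Δ.) -/

import Mathlib

open scoped RealInnerProductSpace

variable {V : Type*} [NormedAddCommGroup V] [InnerProductSpace ℝ V] [FiniteDimensional ℝ V]

/-- The reflection in the hyperplane orthogonal to `α`. -/
noncomputable def rootReflection (α : V) : V ≃ₗᵢ[ℝ] V := Submodule.reflection (ℝ ∙ α)ᗮ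

/-- A finite crystallographic (reduced) root system in `V`. -/
structure IsRootSystem (Φ : Set V) : Prop where
  finite : Φ.Finite
  ne_zero : ∀ α ∈ Φ, α ≠ 0
  reflect_mem : ∀ α ∈ Φ, ∀ β ∈ Φ, rootReflection α β ∈ Φ
  crystal : ∀ α ∈ Φ, ∀ β ∈ Φ, ∃ k : ℤ, 2 * ⟪β, α⟫ / ⟪α, α⟫ = (k : ℝ)
  reduced : ∀ α ∈ Φ, ∀ t : ℝ, t • α ∈ Φ → t = 1 ∨ t = -1

/-- `P` is a system of positive roots for `Φ`, cut out by a linear functional. -/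
def IsPositiveSystem (Φ P : Set V) : Prop :=
  ∃ h : V →ₗ[ℝ] ℝ, (∀ α ∈ Φ, h α ≠ 0) ∧ P = {α ∈ Φ | 0 < h α}

/-- The Weyl group: the subgroup of isometries generated by the root reflections. -/
noncomputable def weylGroup (Φ : Set V) : Subgroup (V ≃ₗᵢ[ℝ] V) :=
  Subgroup.closure {g | ∃ α ∈ Φ, g = rootReflection α}

/-- The inversion set `I(w) = Φ₊ ∩ w(Φ₋)`. -/
def invSet (P : Set V) (w : V ≃ₗᵢ[ℝ] V) : Set V := P ∩ (⇑w '' (-P))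

/-- A simple root: a positive root that is not the sum of two positive roots. -/
def IsSimpleRoot (P : Set V) (α : V) : Prop :=
  α ∈ P ∧ ¬∃ β ∈ P, ∃ γ ∈ P, α = β + γ

/-- The length of `w`: minimal length of a word in simple reflections for `w`. -/
noncomputable def wlen (P : Set V) (w : V ≃ₗᵢ[ℝ] V) : ℕ :=
  sInf {n | ∃ l : List V, (∀ α ∈ l, IsSimpleRoot P α) ∧ l.length = n ∧
    (l.map rootReflection).prod = w}

/-- Bruhat order. -/
def bruhatLE (Φ P : Set V) : (V ≃ₗᵢ[ℝ] V) → (V ≃ₗᵢ[ℝ] V) → Prop :=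
  Relation.ReflTransGen fun a b =>
    (∃ α ∈ Φ, b = rootReflection α * a) ∧ wlen P a < wlen P b

def bruhatLT (Φ P : Set V) (a b : V ≃ₗᵢ[ℝ] V) : Prop := bruhatLE Φ P a b ∧ a ≠ b

/-- The parabolic subgroup generated by reflections in the roots of `J`. -/
noncomputable def parabolic (J : Set V) : Subgroup (V ≃ₗᵢ[ℝ] V) :=
  Subgroup.closure {g | ∃ α ∈ J, g = rootReflection α}

/-- Minimal length representatives of the cosets `W_J\W`. -/
def minReps (Φ P J : Set V) : Set (V ≃ₗᵢ[ℝ] V) :=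
  {v | v ∈ weylGroup Φ ∧ ∀ u ∈ parabolic J, wlen P v ≤ wlen P (u * v)}

/-!
Write `Δ = Φ ∩ U`, with positive roots `Δ₊ = {α ∈ Δ | 0 < h α}`. For `σ ∈ W_Δ`, the condition
`I_Δ(σ) = I_Φ(w) ∩ Δ` says exactly that `σ` carries `Δ₊` onto the positive system `{g > 0}` of `Δ`,
where `g = h ∘ w⁻¹`. So the theorem is the simple transitivity of `W_Δ` on positive systems.

The crystallographic input is that `β - α ∈ Δ` whenever `⟪β, α⟫ > 0`. From it, a simple reflection
`s_α` permutes `Δ₊ \ {α}`. Existence: if some positive root is `g`-negative, then so is a simple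
root `α`, and passing from `g` to `g ∘ s_α` lowers the number of such roots. Uniqueness: `W_Δ` is
generated by simple reflections, and the exchange condition shortens any word whose product
preserves `Δ₊` until it is empty.
-/

theorem Set.Finite.induction_on_image_lt {α β : Type*} [LinearOrder β] {s : Set α}
    (hs : s.Finite) (f : α → β) {p : α → Prop}
    (step : ∀ a ∈ s, (∀ b ∈ s, f b < f a → p b) → p a) : ∀ a ∈ s, p a := by
  by_contra! hc
  obtain ⟨a, ⟨has, hpa⟩, hmin⟩ :=
    Set.exists_min_image {a ∈ s | ¬p a} f (hs.subset (Set.sep_subset _ _)) hc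
  exact hpa (step a has fun b hb hlt => by_contra fun hpb => (hmin b ⟨hb, hpb⟩).not_gt hlt)

section

omit [FiniteDimensional ℝ V]

theorem rootReflection_apply (α v : V) :
    rootReflection α v = v - (2 * ⟪v, α⟫ / ⟪α, α⟫) • α := by
  rw [rootReflection, Submodule.reflection_orthogonal_apply, Submodule.reflection_singleton_apply,
    real_inner_self_eq_norm_sq, real_inner_comm]
  module

theorem rootReflection_apply_self (α : V) : rootReflection α α = -α :=
  Submodule.reflection_orthogonalComplement_singleton_eq_neg α

theorem rootReflection_rootReflection (α v : V) : rootReflection α (rootReflection α v) = v :=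
  Submodule.reflection_reflection _ _

theorem rootReflection_mul_self (α : V) : rootReflection α * rootReflection α = 1 :=
  LinearIsometryEquiv.ext (rootReflection_rootReflection α)

theorem rootReflection_inv (α : V) : (rootReflection α)⁻¹ = rootReflection α :=
  inv_eq_of_mul_eq_one_right (rootReflection_mul_self α)

theorem rootReflection_neg (α : V) : rootReflection (-α) = rootReflection α := by
  simp only [rootReflection, ← Set.neg_singleton, Submodule.span_neg]

theorem rootReflection_map (u : V ≃ₗᵢ[ℝ] V) (α : V) :
    rootReflection (u α) = u * rootReflection α * u⁻¹ := by
  ext v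
  simp only [LinearIsometryEquiv.coe_mul, LinearIsometryEquiv.coe_inv, Function.comp_apply,
    rootReflection_apply, map_sub, map_smul, LinearIsometryEquiv.apply_symm_apply]
  rw [← u.inner_map_map (u.symm v), ← u.inner_map_map α, u.apply_symm_apply]

namespace IsRootSystem

variable {Δ : Set V} (hΔ : IsRootSystem Δ)
include hΔ

theorem neg_mem {α : V} (hα : α ∈ Δ) : -α ∈ Δ := by
  simpa [rootReflection_apply_self] using hΔ.reflect_mem α hα α hα

theorem neg_mem_iff {α : V} : -α ∈ Δ ↔ α ∈ Δ :=
  ⟨fun h => neg_neg α ▸ hΔ.neg_mem h, hΔ.neg_mem⟩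

theorem apply_mem_iff {w : V ≃ₗᵢ[ℝ] V} (hw : w ∈ weylGroup Δ) {v : V} : w v ∈ Δ ↔ v ∈ Δ := by
  induction hw using Subgroup.closure_induction generalizing v with
  | mem _ hx =>
    obtain ⟨α, hα, rfl⟩ := hx
    exact ⟨fun hv => by simpa [rootReflection_rootReflection] using hΔ.reflect_mem α hα _ hv,
      hΔ.reflect_mem α hα v⟩
  | one => rfl
  | mul x y _ _ hx hy => exact hx.trans hy
  | inv x _ hx => rw [← hx, LinearIsometryEquiv.coe_inv, x.apply_symm_apply]

theorem symm_apply_mem_iff {w : V ≃ₗᵢ[ℝ] V} (hw : w ∈ weylGroup Δ) {v : V} :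
    w.symm v ∈ Δ ↔ v ∈ Δ :=
  hΔ.apply_mem_iff (inv_mem hw)

theorem inter_submodule (U : Submodule ℝ V) : IsRootSystem (Δ ∩ U) where
  finite := hΔ.finite.subset Set.inter_subset_left
  ne_zero α hα := hΔ.ne_zero α hα.1
  reflect_mem α hα β hβ := ⟨hΔ.reflect_mem α hα.1 β hβ.1, by
    rw [SetLike.mem_coe, rootReflection_apply]
    exact U.sub_mem hβ.2 (U.smul_mem _ hα.2)⟩
  crystal α hα β hβ := hΔ.crystal α hα.1 β hβ.1
  reduced α hα t ht := hΔ.reduced α hα.1 t ht.1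

theorem inner_self_pos {α : V} (hα : α ∈ Δ) : 0 < ⟪α, α⟫ :=
  real_inner_self_pos.2 (hΔ.ne_zero α hα)

theorem inner_lt_norm_mul {α β : V} (hα : α ∈ Δ) (hβ : β ∈ Δ) (hne : β ≠ α) :
    ⟪β, α⟫ < ‖β‖ * ‖α‖ := by
  refine inner_lt_norm_mul_iff_real.2 fun heq => hne ?_
  have hα0 : ‖α‖ ≠ 0 := norm_ne_zero_iff.2 (hΔ.ne_zero α hα)
  have hβα : β = (‖β‖ / ‖α‖) • α := by
    rw [div_eq_inv_mul, mul_smul, ← heq, smul_smul, inv_mul_cancel₀ hα0, one_smul]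
  rcases hΔ.reduced α hα _ (hβα ▸ hβ) with h1 | h1
  · rw [hβα, h1, one_smul]
  · linarith [div_nonneg (norm_nonneg β) (norm_nonneg α)]

theorem sub_mem_of_inner_pos {α β : V} (hα : α ∈ Δ) (hβ : β ∈ Δ) (hne : β ≠ α)
    (hpos : 0 < ⟪β, α⟫) : β - α ∈ Δ := by
  obtain ⟨k, hk⟩ := hΔ.crystal α hα β hβ
  obtain ⟨k', hk'⟩ := hΔ.crystal β hβ α hα
  have hαα := hΔ.inner_self_pos hα
  have hββ := hΔ.inner_self_pos hβ
  rw [div_eq_iff hαα.ne'] at hk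
  rw [div_eq_iff hββ.ne', real_inner_comm] at hk'
  -- the Cartan integers `k`, `k'` are positive with `k * k' < 4` by strict Cauchy–Schwarz
  have hk0 : 0 < k := Int.cast_pos.1 (pos_of_mul_pos_left (hk ▸ by positivity) hαα.le)
  have hk'0 : 0 < k' := Int.cast_pos.1 (pos_of_mul_pos_left (hk' ▸ by positivity) hββ.le)
  have hkk' : k * k' < 4 := by
    have hcs := mul_self_lt_mul_self hpos.le (hΔ.inner_lt_norm_mul hα hβ hne)
    have h4 : (k * k' : ℝ) * (⟪α, α⟫ * ⟪β, β⟫) < 4 * (⟪α, α⟫ * ⟪β, β⟫) := by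
      rw [show (k * k' : ℝ) * (⟪α, α⟫ * ⟪β, β⟫) = 4 * (⟪β, α⟫ * ⟪β, α⟫) by
        linear_combination (-(k' * ⟪β, β⟫)) * hk + (-(2 * ⟪β, α⟫)) * hk']
      rw [real_inner_self_eq_norm_mul_norm α, real_inner_self_eq_norm_mul_norm β]
      nlinarith
    exact_mod_cast lt_of_mul_lt_mul_right h4 (by positivity)
  have hk1 : k = 1 ∨ k' = 1 := by
    by_contra! h
    nlinarith [(by omega : 2 ≤ k), (by omega : 2 ≤ k')]
  rcases hk1 with rfl | rfl
  · have := hΔ.reflect_mem α hα β hβ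
    rwa [rootReflection_apply, hk, mul_div_cancel_right₀ _ hαα.ne', Int.cast_one, one_smul] at this
  · have := hΔ.neg_mem (hΔ.reflect_mem β hβ α hα)
    rwa [rootReflection_apply, real_inner_comm, hk', mul_div_cancel_right₀ _ hββ.ne', Int.cast_one,
      one_smul, neg_sub] at this

end IsRootSystem

def posRoots (Δ : Set V) (h : V →ₗ[ℝ] ℝ) : Set V := {α ∈ Δ | 0 < h α}

def simpleReflections (Δ : Set V) (h : V →ₗ[ℝ] ℝ) : Set (V ≃ₗᵢ[ℝ] V) :=
  rootReflection '' {α | IsSimpleRoot (posRoots Δ h) α}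

namespace IsRootSystem

variable {Δ : Set V} (hΔ : IsRootSystem Δ) {h : V →ₗ[ℝ] ℝ}
include hΔ

theorem posRoots_induction {p : V → Prop}
    (step : ∀ β ∈ posRoots Δ h, (∀ γ ∈ posRoots Δ h, h γ < h β → p γ) → p β) :
    ∀ β ∈ posRoots Δ h, p β :=
  (hΔ.finite.subset (Set.sep_subset _ _)).induction_on_image_lt h step

theorem mem_closure_isSimpleRoot :
    ∀ β ∈ posRoots Δ h, β ∈ AddSubmonoid.closure {α | IsSimpleRoot (posRoots Δ h) α} := by
  refine hΔ.posRoots_induction fun β hβ ih => ?_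
  by_cases hs : IsSimpleRoot (posRoots Δ h) β
  · exact AddSubmonoid.subset_closure hs
  obtain ⟨γ, hγ, δ, hδ, rfl⟩ : ∃ γ ∈ posRoots Δ h, ∃ δ ∈ posRoots Δ h, β = γ + δ := by
    simpa [IsSimpleRoot, hβ] using hs
  refine add_mem (ih γ hγ ?_) (ih δ hδ ?_) <;> linarith [map_add h γ δ, hγ.2, hδ.2]

theorem exists_isSimpleRoot_inner_pos {β : V} (hβ : β ∈ posRoots Δ h) :
    ∃ α, IsSimpleRoot (posRoots Δ h) α ∧ 0 < ⟪β, α⟫ := by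
  by_contra! hneg
  have hle : ∀ x ∈ AddSubmonoid.closure {α | IsSimpleRoot (posRoots Δ h) α}, ⟪β, x⟫ ≤ 0 :=
    fun x hx => AddSubmonoid.closure_induction (fun α hα => hneg α hα) (by simp)
      (fun x y _ _ hx hy => by rw [inner_add_right]; linarith) hx
  exact hΔ.ne_zero β hβ.1
    (real_inner_self_nonpos.1 (hle β (hΔ.mem_closure_isSimpleRoot β hβ)))

theorem exists_isSimpleRoot_neg (g : V →ₗ[ℝ] ℝ) :
    ∀ β ∈ posRoots Δ h, g β < 0 → ∃ α, IsSimpleRoot (posRoots Δ h) α ∧ g α < 0 := by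
  refine hΔ.posRoots_induction fun β hβ ih hgβ => ?_
  by_cases hs : IsSimpleRoot (posRoots Δ h) β
  · exact ⟨β, hs, hgβ⟩
  obtain ⟨γ, hγ, δ, hδ, rfl⟩ : ∃ γ ∈ posRoots Δ h, ∃ δ ∈ posRoots Δ h, β = γ + δ := by
    simpa [IsSimpleRoot, hβ] using hs
  rw [map_add] at hgβ
  rcases lt_or_ge (g γ) 0 with hgγ | hgγ
  · exact ih γ hγ (by linarith [map_add h γ δ, hδ.2]) hgγ
  · exact ih δ hδ (by linarith [map_add h γ δ, hγ.2]) (by linarith)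

theorem invSet_posRoots {σ : V ≃ₗᵢ[ℝ] V} (hσ : σ ∈ weylGroup Δ) :
    invSet (posRoots Δ h) σ = {β ∈ posRoots Δ h | h (σ.symm β) < 0} := by
  ext β
  simp only [invSet, LinearIsometryEquiv.image_eq_preimage_symm, Set.mem_inter_iff,
    Set.mem_preimage, Set.mem_neg, posRoots, Set.mem_ofPred_eq, map_neg, Left.neg_pos_iff]
  exact and_congr_right fun hβ =>
    and_iff_right (hΔ.neg_mem_iff.2 ((hΔ.symm_apply_mem_iff hσ).2 hβ.1))

variable (hh : ∀ α ∈ Δ, h α ≠ 0)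
include hh

theorem mem_posRoots_or_neg {α : V} (hα : α ∈ Δ) : α ∈ posRoots Δ h ∨ -α ∈ posRoots Δ h := by
  rcases (hh α hα).lt_or_gt with hlt | hgt
  · exact Or.inr ⟨hΔ.neg_mem hα, by simpa using hlt⟩
  · exact Or.inl ⟨hα, hgt⟩

theorem sub_mem_posRoots {α γ : V} (hα : IsSimpleRoot (posRoots Δ h) α)
    (hγ : γ ∈ posRoots Δ h) (hne : γ ≠ α) (hpos : 0 < ⟪γ, α⟫) : γ - α ∈ posRoots Δ h := by
  rcases hΔ.mem_posRoots_or_neg hh (hΔ.sub_mem_of_inner_pos hα.1.1 hγ.1 hne hpos) with h1 | h1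
  · exact h1
  · exact absurd ⟨γ, hγ, -(γ - α), h1, by abel⟩ hα.2

theorem exists_sub_smul_mem_posRoots {α : V} (hα : IsSimpleRoot (posRoots Δ h) α) :
    ∀ γ ∈ posRoots Δ h, γ ≠ α →
      ∃ j : ℕ, γ - (j : ℝ) • α ∈ posRoots Δ h ∧ ⟪γ - (j : ℝ) • α, α⟫ ≤ 0 := by
  refine hΔ.posRoots_induction fun γ hγ ih hne => ?_
  by_cases hpos : 0 < ⟪γ, α⟫
  swap
  · exact ⟨0, by simpa using hγ, by simpa using hpos⟩
  have hγα := hΔ.sub_mem_posRoots hh hα hγ hne hpos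
  have hne' : γ - α ≠ α := fun heq => by
    have h2 := hΔ.reduced α hα.1.1 2
      (by rw [show (2 : ℝ) • α = γ by linear_combination (norm := module) -heq]; exact hγ.1)
    norm_num at h2
  obtain ⟨j, hj⟩ := ih _ hγα (by linarith [map_sub h γ α, hα.1.2]) hne'
  refine ⟨j + 1, ?_⟩
  rwa [show γ - ((j + 1 : ℕ) : ℝ) • α = γ - α - (j : ℝ) • α by push_cast; module]

theorem rootReflection_mem_posRoots {α β : V} (hα : IsSimpleRoot (posRoots Δ h) α)
    (hβ : β ∈ posRoots Δ h) (hne : β ≠ α) : rootReflection α β ∈ posRoots Δ h := by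
  by_contra hnot
  set c := 2 * ⟪β, α⟫ / ⟪α, α⟫
  have hαα := hΔ.inner_self_pos hα.1.1
  have hsβ : rootReflection α β = β - c • α := rootReflection_apply α β
  have hγ : c • α - β ∈ posRoots Δ h := by
    rcases hΔ.mem_posRoots_or_neg hh (hΔ.reflect_mem α hα.1.1 β hβ.1) with h1 | h1
    · exact absurd h1 hnot
    · rwa [hsβ, neg_sub] at h1
  have hγne : c • α - β ≠ α := fun heq => by
    have hβc : β = (c - 1) • α := by linear_combination (norm := module) -heq
    rcases hΔ.reduced α hα.1.1 _ (hβc ▸ hβ.1) with h1 | h1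
    · exact hne (by rw [hβc, h1, one_smul])
    · have := hβ.2
      rw [hβc, h1, neg_one_smul, map_neg] at this
      linarith [hα.1.2]
  -- `β - jα` and `(c - j')α - β` are positive roots with `j, j' ≥ c / 2`, yet their sum is
  -- `(c - j - j')α`
  obtain ⟨j, hj, hjα⟩ := hΔ.exists_sub_smul_mem_posRoots hh hα β hβ hne
  obtain ⟨j', hj', hj'α⟩ := hΔ.exists_sub_smul_mem_posRoots hh hα _ hγ hγne
  have hj2 := hj.2
  have hj'2 := hj'.2
  simp only [inner_sub_left, inner_smul_left, map_sub, map_smul, smul_eq_mul,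
    RCLike.conj_to_real] at hjα hj'α hj2 hj'2
  have hcαα : c * ⟪α, α⟫ = 2 * ⟪β, α⟫ := div_mul_cancel₀ _ hαα.ne'
  have hcj : c ≤ j + j' := le_of_mul_le_mul_right (by linarith) hαα
  nlinarith [hα.1.2]

theorem rootReflection_mem_closure_simpleReflections :
    ∀ β ∈ posRoots Δ h, rootReflection β ∈ Subgroup.closure (simpleReflections Δ h) := by
  refine hΔ.posRoots_induction fun β hβ ih => ?_
  by_cases hs : IsSimpleRoot (posRoots Δ h) β
  · exact Subgroup.subset_closure ⟨β, hs, rfl⟩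
  obtain ⟨α, hα, hβα⟩ := hΔ.exists_isSimpleRoot_inner_pos hβ
  have hsα : rootReflection α ∈ Subgroup.closure (simpleReflections Δ h) :=
    Subgroup.subset_closure ⟨α, hα, rfl⟩
  have hβ' := hΔ.rootReflection_mem_posRoots hh hα hβ (by rintro rfl; exact hs hα)
  have hlt : h (rootReflection α β) < h β := by
    rw [rootReflection_apply, map_sub, map_smul, smul_eq_mul]
    have := hΔ.inner_self_pos hα.1.1
    linarith [mul_pos (by positivity : 0 < 2 * ⟪β, α⟫ / ⟪α, α⟫) hα.1.2]
  have hconj : rootReflection β =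
      rootReflection α * rootReflection (rootReflection α β) * (rootReflection α)⁻¹ := by
    rw [← rootReflection_map, rootReflection_rootReflection]
  rw [hconj]
  exact mul_mem (mul_mem hsα (ih _ hβ' hlt)) (inv_mem hsα)

theorem weylGroup_le_closure_simpleReflections :
    weylGroup Δ ≤ Subgroup.closure (simpleReflections Δ h) := by
  rw [weylGroup, Subgroup.closure_le]
  rintro _ ⟨α, hα, rfl⟩
  rcases hΔ.mem_posRoots_or_neg hh hα with hpos | hneg
  · exact hΔ.rootReflection_mem_closure_simpleReflections hh α hpos
  · rw [← rootReflection_neg]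
    exact hΔ.rootReflection_mem_closure_simpleReflections hh _ hneg

theorem exists_list_simpleReflections {σ : V ≃ₗᵢ[ℝ] V} (hσ : σ ∈ weylGroup Δ) :
    ∃ l : List (V ≃ₗᵢ[ℝ] V), (∀ x ∈ l, x ∈ simpleReflections Δ h) ∧ l.prod = σ := by
  have hσ' := hΔ.weylGroup_le_closure_simpleReflections hh hσ
  rw [← Subgroup.mem_toSubmonoid, Subgroup.closure_toSubmonoid] at hσ'
  obtain ⟨l, hl, rfl⟩ := Submonoid.exists_list_of_mem_closure hσ'
  refine ⟨l, fun x hx => (hl x hx).elim id fun hinv => ?_, rfl⟩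
  obtain ⟨α, hα, hαx⟩ := Set.mem_inv.1 hinv
  exact ⟨α, hα, by rw [← rootReflection_inv, hαx, inv_inv]⟩

/-- The strong exchange condition. -/
theorem exists_list_prod_eq_mul_rootReflection (l : List (V ≃ₗᵢ[ℝ] V))
    (hl : ∀ x ∈ l, x ∈ simpleReflections Δ h) {β : V} (hβ : β ∈ posRoots Δ h)
    (hlβ : l.prod β ∉ posRoots Δ h) :
    ∃ l' : List (V ≃ₗᵢ[ℝ] V), (∀ x ∈ l', x ∈ simpleReflections Δ h) ∧
      l'.length < l.length ∧ l'.prod = l.prod * rootReflection β := by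
  induction l with
  | nil => exact absurd hβ hlβ
  | cons x m ih =>
    obtain ⟨α, hα, rfl⟩ := hl x List.mem_cons_self
    have hm : ∀ y ∈ m, y ∈ simpleReflections Δ h := fun y hy => hl y (List.mem_cons_of_mem _ hy)
    rw [List.prod_cons] at hlβ ⊢
    by_cases hmβ : m.prod β ∈ posRoots Δ h
    · have hα : m.prod β = α := by
        by_contra hne
        exact hlβ (hΔ.rootReflection_mem_posRoots hh hα hmβ hne)
      refine ⟨m, hm, by simp, ?_⟩
      rw [← hα, rootReflection_map]
      simp [mul_assoc, rootReflection_mul_self]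
    · obtain ⟨l', hl', hlen, hprod⟩ := ih hm hmβ
      refine ⟨rootReflection α :: l', List.forall_mem_cons.2 ⟨⟨α, hα, rfl⟩, hl'⟩,
        by simpa using hlen, by rw [List.prod_cons, hprod, mul_assoc]⟩

theorem list_prod_eq_one_of_mapsTo_posRoots (l : List (V ≃ₗᵢ[ℝ] V))
    (hl : ∀ x ∈ l, x ∈ simpleReflections Δ h)
    (hmaps : Set.MapsTo l.prod (posRoots Δ h) (posRoots Δ h)) : l.prod = 1 := by
  induction hn : l.length using Nat.strong_induction_on generalizing l with
  | _ n ih =>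
  rcases l.eq_nil_or_concat' with rfl | ⟨l₀, x, rfl⟩
  · rfl
  obtain ⟨a, ha, rfl⟩ := hl x (by simp)
  have hprod : (l₀ ++ [rootReflection a]).prod = l₀.prod * rootReflection a := by simp
  have hl₀a : l₀.prod a ∉ posRoots Δ h := fun hpos => by
    have := (hmaps ha.1).2
    rw [hprod, LinearIsometryEquiv.coe_mul, Function.comp_apply, rootReflection_apply_self,
      map_neg, map_neg] at this
    linarith [hpos.2]
  obtain ⟨l', hl', hlen, hl'prod⟩ := hΔ.exists_list_prod_eq_mul_rootReflection hh l₀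
    (fun y hy => hl y (List.mem_append_left _ hy)) ha.1 hl₀a
  rw [hprod, ← hl'prod] at hmaps ⊢
  exact ih l'.length (by simp at hn; omega) l' hl' hmaps rfl

theorem eq_one_of_mapsTo_posRoots {σ : V ≃ₗᵢ[ℝ] V} (hσ : σ ∈ weylGroup Δ)
    (hmaps : Set.MapsTo σ (posRoots Δ h) (posRoots Δ h)) : σ = 1 := by
  obtain ⟨l, hl, rfl⟩ := hΔ.exists_list_simpleReflections hh hσ
  exact hΔ.list_prod_eq_one_of_mapsTo_posRoots hh l hl hmaps

theorem ncard_neg_comp_rootReflection_lt (g : V →ₗ[ℝ] ℝ) {α : V}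
    (hα : IsSimpleRoot (posRoots Δ h) α) (hgα : g α < 0) :
    {β ∈ posRoots Δ h | g (rootReflection α β) < 0}.ncard <
      {β ∈ posRoots Δ h | g β < 0}.ncard := by
  have hfin : {β ∈ posRoots Δ h | g β < 0}.Finite :=
    hΔ.finite.subset fun β hβ => hβ.1.1
  calc {β ∈ posRoots Δ h | g (rootReflection α β) < 0}.ncard
      ≤ (rootReflection α '' ({β ∈ posRoots Δ h | g β < 0} \ {α})).ncard := by
        refine Set.ncard_le_ncard (fun β ⟨hβ, hgβ⟩ => ?_) (hfin.sdiff.image _)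
        have hne : β ≠ α := by
          rintro rfl
          rw [rootReflection_apply_self, map_neg] at hgβ
          linarith
        refine ⟨rootReflection α β, ⟨⟨hΔ.rootReflection_mem_posRoots hh hα hβ hne, hgβ⟩,
          fun heq => ?_⟩, rootReflection_rootReflection α β⟩
        have := hβ.2
        rw [← rootReflection_rootReflection α β, Set.mem_singleton_iff.1 heq,
          rootReflection_apply_self, map_neg] at this
        linarith [hα.1.2]
    _ = ({β ∈ posRoots Δ h | g β < 0} \ {α}).ncard :=
        Set.ncard_image_of_injective _ (rootReflection α).injective
    _ < {β ∈ posRoots Δ h | g β < 0}.ncard :=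
        Set.ncard_sdiff_singleton_lt_of_mem ⟨hα.1, hgα⟩ hfin

theorem exists_mapsTo_posRoots (g : V →ₗ[ℝ] ℝ) (hg : ∀ α ∈ Δ, g α ≠ 0) :
    ∃ σ ∈ weylGroup Δ, Set.MapsTo σ (posRoots Δ h) (posRoots Δ g) := by
  induction hn : {β ∈ posRoots Δ h | g β < 0}.ncard using Nat.strong_induction_on
    generalizing g with
  | _ n ih =>
  by_cases hneg : ∃ β ∈ posRoots Δ h, g β < 0
  swap
  · exact ⟨1, one_mem _, fun β hβ =>
      ⟨hβ.1, (not_lt.1 fun hlt => hneg ⟨β, hβ, hlt⟩).lt_of_ne' (hg β hβ.1)⟩⟩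
  obtain ⟨β, hβ, hgβ⟩ := hneg
  obtain ⟨α, hα, hgα⟩ := hΔ.exists_isSimpleRoot_neg g β hβ hgβ
  let g' : V →ₗ[ℝ] ℝ := g ∘ₗ (rootReflection α).toLinearEquiv.toLinearMap
  obtain ⟨σ, hσ, hmaps⟩ := ih _ (hn ▸ hΔ.ncard_neg_comp_rootReflection_lt hh g hα hgα) g'
    (fun γ hγ => hg _ (hΔ.reflect_mem α hα.1.1 γ hγ)) rfl
  have hασ : rootReflection α * σ ∈ weylGroup Δ :=
    mul_mem (Subgroup.subset_closure ⟨α, hα.1.1, rfl⟩) hσ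
  exact ⟨_, hασ, fun γ hγ => ⟨(hΔ.apply_mem_iff hασ).2 hγ.1, (hmaps hγ).2⟩⟩

theorem eq_of_mapsTo_posRoots {g : V →ₗ[ℝ] ℝ} {σ τ : V ≃ₗᵢ[ℝ] V} (hσ : σ ∈ weylGroup Δ)
    (hτ : τ ∈ weylGroup Δ) (hσg : Set.MapsTo σ (posRoots Δ h) (posRoots Δ g))
    (hτg : Set.MapsTo τ (posRoots Δ h) (posRoots Δ g)) : σ = τ := by
  have hτσ : τ⁻¹ * σ ∈ weylGroup Δ := mul_mem (inv_mem hτ) hσ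
  refine (inv_mul_eq_one.1 (hΔ.eq_one_of_mapsTo_posRoots hh hτσ fun β hβ => ?_)).symm
  rcases hΔ.mem_posRoots_or_neg hh ((hΔ.apply_mem_iff hτσ).2 hβ.1) with hpos | hneg
  · exact hpos
  · have h1 := (hτg hneg).2
    have h2 := (hσg hβ).2
    simp only [LinearIsometryEquiv.coe_mul, LinearIsometryEquiv.coe_inv, Function.comp_apply,
      map_neg, LinearIsometryEquiv.apply_symm_apply] at h1
    linarith

theorem existsUnique_mapsTo_posRoots (g : V →ₗ[ℝ] ℝ) (hg : ∀ α ∈ Δ, g α ≠ 0) :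
    ∃! σ, σ ∈ weylGroup Δ ∧ Set.MapsTo σ (posRoots Δ h) (posRoots Δ g) := by
  obtain ⟨σ, hσ, hmaps⟩ := hΔ.exists_mapsTo_posRoots hh g hg
  exact ⟨σ, ⟨hσ, hmaps⟩, fun τ ⟨hτ, hτmaps⟩ => hΔ.eq_of_mapsTo_posRoots hh hτ hσ hτmaps hmaps⟩

theorem invSet_posRoots_eq_iff {σ : V ≃ₗᵢ[ℝ] V} (hσ : σ ∈ weylGroup Δ) {g : V →ₗ[ℝ] ℝ}
    (hg : ∀ α ∈ Δ, g α ≠ 0) :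
    invSet (posRoots Δ h) σ = {β ∈ posRoots Δ h | g β < 0} ↔
      Set.MapsTo σ (posRoots Δ h) (posRoots Δ g) := by
  rw [hΔ.invSet_posRoots hσ]
  constructor
  · intro heq β hβ
    have hmem (γ : V) : (γ ∈ posRoots Δ h ∧ h (σ.symm γ) < 0) ↔ (γ ∈ posRoots Δ h ∧ g γ < 0) :=
      Set.ext_iff.1 heq γ
    have hσβ : σ β ∈ Δ := (hΔ.apply_mem_iff hσ).2 hβ.1
    refine ⟨hσβ, (hg _ hσβ).lt_or_gt.resolve_left fun hlt => ?_⟩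
    rcases hΔ.mem_posRoots_or_neg hh hσβ with hpos | hneg
    · have := ((hmem (σ β)).2 ⟨hpos, hlt⟩).2
      rw [σ.symm_apply_apply] at this
      linarith [hβ.2]
    · have hβ' : h (σ.symm (-σ β)) < 0 := by
        rw [map_neg, σ.symm_apply_apply, map_neg]
        linarith [hβ.2]
      have := ((hmem (-σ β)).1 ⟨hneg, hβ'⟩).2
      rw [map_neg] at this
      linarith
  · intro hmaps
    ext β
    refine and_congr_right fun hβ => ?_
    have hσβ : σ.symm β ∈ Δ := (hΔ.symm_apply_mem_iff hσ).2 hβ.1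
    rcases hΔ.mem_posRoots_or_neg hh hσβ with hpos | hneg
    · have := (hmaps hpos).2
      rw [σ.apply_symm_apply] at this
      exact iff_of_false hpos.2.not_gt this.not_gt
    · have := (hmaps hneg).2
      rw [map_neg, σ.apply_symm_apply] at this
      exact iff_of_true (by linarith [hneg.2, map_neg h (σ.symm β)]) (by linarith [map_neg g β])

end IsRootSystem

end

/-- existence and uniqueness of the flattening `f_Δ(w)`. -/
theorem flattening_exists_unique
    (Φ P : Set V) (hΦ : IsRootSystem Φ) (hP : IsPositiveSystem Φ P)
    (U : Submodule ℝ V) (w : V ≃ₗᵢ[ℝ] V) (hw : w ∈ weylGroup Φ) :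
    ∃! σ : V ≃ₗᵢ[ℝ] V, σ ∈ weylGroup (Φ ∩ (U : Set V)) ∧
      invSet (Φ ∩ (U : Set V) ∩ P) σ = invSet P w ∩ (Φ ∩ (U : Set V)) := by
  obtain ⟨h, hh, rfl⟩ := hP
  have hΔ := hΦ.inter_submodule U
  have hhΔ : ∀ α ∈ Φ ∩ U, h α ≠ 0 := fun α hα => hh α hα.1
  let g : V →ₗ[ℝ] ℝ := h ∘ₗ (w⁻¹).toLinearEquiv.toLinearMap
  have hg : ∀ α ∈ Φ ∩ U, g α ≠ 0 := fun α hα => hh _ ((hΦ.symm_apply_mem_iff hw).2 hα.1)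
  have hpos : Φ ∩ U ∩ {α ∈ Φ | 0 < h α} = posRoots (Φ ∩ U) h := by
    ext α
    exact ⟨fun ⟨hα, _, hα'⟩ => ⟨hα, hα'⟩, fun ⟨hα, hα'⟩ => ⟨hα, hα.1, hα'⟩⟩
  have htarget : invSet {α ∈ Φ | 0 < h α} w ∩ (Φ ∩ U) = {β ∈ posRoots (Φ ∩ U) h | g β < 0} := by
    rw [show {α ∈ Φ | 0 < h α} = posRoots Φ h from rfl, hΦ.invSet_posRoots hw]
    ext β
    exact ⟨fun ⟨⟨⟨_, hβ⟩, hgβ⟩, hβU⟩ => ⟨⟨hβU, hβ⟩, hgβ⟩,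
      fun ⟨⟨hβU, hβ⟩, hgβ⟩ => ⟨⟨⟨hβU.1, hβ⟩, hgβ⟩, hβU⟩⟩
  rw [hpos, htarget]
  refine (existsUnique_congr fun σ => and_congr_right fun hσ => ?_).2
    (hΔ.existsUnique_mapsTo_posRoots hhΔ g hg)
  exact hΔ.invSet_posRoots_eq_iff hhΔ hσ hg
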